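/- Covering lemma: Let x ∈ Δ^{2(k−2)−1} determine 2(k−2) points f_0(x), ..., f_{2(k−2)−1}(x) on the unit circle (via cumulative angular coordinates) and the k−2 chords ℓ_i(x) = [f_i(x), f_{i+k−2}(x)], 0 ≤ i ≤ k−3. Then any connected set F contained in the open unit disk that is disjoint from all chords ℓ_j(x) is contained in one of the regions R^i_x, 1 ≤ i ≤ 2(k−2), defined by the chords. -/

import Mathlib

open Set AffineSubspace

noncomputable section

abbrev Plane := EuclideanSpace ℝ (Fin 2)

/-- The point of the unit circle at parameter `t` (one full turn as `t` runs over an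
interval of length 1). -/
def circpt (t : ℝ) : Plane :=
  (EuclideanSpace.equiv (Fin 2) ℝ).symm ![Real.cos (2 * Real.pi * t), Real.sin (2 * Real.pi * t)]

/-- Cumulative angular coordinates: `tpar x i = x₀ + ⋯ + x_{i-1}`, so
`fᵢ(x) = circpt (tpar x i)`. -/
def tpar (x : ℕ → ℝ) (i : ℕ) : ℝ := ∑ j ∈ Finset.range i, x j

/-- The chord `ℓ_j(x) = [f_{j mod (k-2)}(x), f_{j mod (k-2) + (k-2)}(x)]` as a segment. -/
def chordSeg (k : ℕ) (x : ℕ → ℝ) (j : ℕ) : Set Plane :=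
  segment ℝ (circpt (tpar x (j % (k - 2)))) (circpt (tpar x (j % (k - 2) + (k - 2))))

/-- The line (affine span) of the chord `ℓ_j(x)`. -/
def chordLine (k : ℕ) (x : ℕ → ℝ) (j : ℕ) : AffineSubspace ℝ Plane :=
  affineSpan ℝ ({circpt (tpar x (j % (k - 2))), circpt (tpar x (j % (k - 2) + (k - 2)))} : Set Plane)

/-- Whether the chord `ℓ_j(x)` is a genuine segment (not a single point). -/
def chordNondeg (k : ℕ) (x : ℕ → ℝ) (j : ℕ) : Prop :=
  circpt (tpar x (j % (k - 2))) ≠ circpt (tpar x (j % (k - 2) + (k - 2)))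

/-- The midpoint of the arc from `f_{i-1}(x)` to `f_i(x)`, a reference point on the
side of the bounding chords containing that arc. -/
def arcMid (x : ℕ → ℝ) (i : ℕ) : Plane := circpt ((tpar x (i - 1) + tpar x i) / 2)

/-- The open arc from `f_{i-1}(x)` to `f_i(x)`. -/
def openArc (x : ℕ → ℝ) (i : ℕ) : Set Plane := circpt '' Set.Ioo (tpar x (i - 1)) (tpar x i)

/-! ### Auxiliary material for the proof -/

namespace RegionCovering

open Real

/-- The (affine) "cross product" functional vanishing on the line through `A` and `B`. -/
def gg (A B y : Plane) : ℝ :=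
  (B 0 - A 0) * (y 1 - A 1) - (B 1 - A 1) * (y 0 - A 0)

lemma circpt_apply0 (t : ℝ) : circpt t 0 = Real.cos (2 * Real.pi * t) := rfl

lemma circpt_apply1 (t : ℝ) : circpt t 1 = Real.sin (2 * Real.pi * t) := rfl

lemma norm_sq_plane (y : Plane) : ‖y‖ ^ 2 = y 0 ^ 2 + y 1 ^ 2 := by
  rw [EuclideanSpace.norm_eq, Real.sq_sqrt (by positivity)]
  simp [Fin.sum_univ_two, sq_abs]

lemma norm_circpt (t : ℝ) : ‖circpt t‖ = 1 := by
  have h : ‖circpt t‖ ^ 2 = 1 := by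
    rw [norm_sq_plane, circpt_apply0, circpt_apply1]
    exact Real.cos_sq_add_sin_sq _
  nlinarith [norm_nonneg (circpt t)]

lemma circpt_add_int (t : ℝ) (n : ℤ) : circpt (t + n) = circpt t := by
  ext i
  fin_cases i
  · show circpt (t + n) 0 = circpt t 0
    rw [circpt_apply0, circpt_apply0, show 2 * Real.pi * (t + n) = 2 * Real.pi * t + n * (2 * Real.pi) by ring]
    exact Real.cos_add_int_mul_two_pi _ n
  · show circpt (t + n) 1 = circpt t 1
    rw [circpt_apply1, circpt_apply1, show 2 * Real.pi * (t + n) = 2 * Real.pi * t + n * (2 * Real.pi) by ring]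
    exact Real.sin_add_int_mul_two_pi _ n

lemma circpt_one : circpt 1 = circpt 0 := by
  have := circpt_add_int 0 1
  simpa using this

lemma circpt_inj {s s' : ℝ} (h : circpt s = circpt s') : ∃ n : ℤ, s - s' = n := by
  have hc : Real.cos (2 * Real.pi * s) = Real.cos (2 * Real.pi * s') := by
    have := congrArg (fun p : Plane => p 0) h; simpa [circpt_apply0] using this
  have hs : Real.sin (2 * Real.pi * s) = Real.sin (2 * Real.pi * s') := by
    have := congrArg (fun p : Plane => p 1) h; simpa [circpt_apply1] using this
  have hang := Real.Angle.cos_sin_inj (θ := 2 * Real.pi * s) (ψ := 2 * Real.pi * s')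
    (by simpa using hc) (by simpa using hs)
  obtain ⟨n, hn⟩ := Real.Angle.angle_eq_iff_two_pi_dvd_sub.mp hang
  refine ⟨n, ?_⟩
  have h2 : 2 * Real.pi * (s - s' - n) = 0 := by linear_combination hn
  have hne : (2:ℝ) * Real.pi ≠ 0 := by
    have := Real.pi_ne_zero; positivity
  have h3 : s - s' - (n:ℝ) = 0 := (mul_eq_zero.mp h2).resolve_left hne
  linarith

lemma gg_cont (A B : Plane) : Continuous (gg A B) := by
  unfold gg; fun_prop

lemma gg_left (A B : Plane) : gg A B A = 0 := by unfold gg; ring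

lemma gg_right (A B : Plane) : gg A B B = 0 := by unfold gg; ring

lemma gg_affine (A B P w : Plane) (μ : ℝ) :
    gg A B (P + μ • (w - P)) = (1 - μ) * gg A B P + μ * gg A B w := by
  unfold gg
  have h0 : (P + μ • (w - P)) 0 = P 0 + μ * (w 0 - P 0) := by
    simp [PiLp.add_apply, PiLp.smul_apply, PiLp.sub_apply]
  have h1 : (P + μ • (w - P)) 1 = P 1 + μ * (w 1 - P 1) := by
    simp [PiLp.add_apply, PiLp.smul_apply, PiLp.sub_apply]
  rw [h0, h1]; ring

lemma plane_ne_iff {A B : Plane} (h : A ≠ B) : A 0 ≠ B 0 ∨ A 1 ≠ B 1 := by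
  by_contra hcon
  push_neg at hcon
  apply h
  ext i
  fin_cases i
  · exact hcon.1
  · exact hcon.2

lemma mem_line_iff {A B : Plane} (hAB : A ≠ B) (y : Plane) :
    y ∈ line[ℝ, A, B] ↔ gg A B y = 0 := by
  constructor
  · intro hy
    have h2 := AffineSubspace.vsub_mem_direction hy (left_mem_affineSpan_pair ℝ A B)
    rw [direction_affineSpan] at h2
    obtain ⟨r, hr⟩ := mem_vectorSpan_pair_rev.mp h2
    have h0 : r * (B 0 - A 0) = y 0 - A 0 := by
      have := congrArg (fun p : Plane => p 0) hr; simpa [vsub_eq_sub] using this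
    have h1 : r * (B 1 - A 1) = y 1 - A 1 := by
      have := congrArg (fun p : Plane => p 1) hr; simpa [vsub_eq_sub] using this
    unfold gg
    linear_combination (B 1 - A 1) * h0 - (B 0 - A 0) * h1
  · intro h0
    rcases plane_ne_iff hAB with hd | hd
    · have hd' : B 0 - A 0 ≠ 0 := sub_ne_zero.mpr (Ne.symm hd)
      have hr : ((y 0 - A 0) / (B 0 - A 0)) • (B -ᵥ A) +ᵥ A = y := by
        ext i
        fin_cases i
        · show ((y 0 - A 0) / (B 0 - A 0)) • (B -ᵥ A) 0 + A 0 = y 0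
          simp only [vsub_eq_sub, PiLp.smul_apply, PiLp.sub_apply, smul_eq_mul]
          field_simp
          ring
        · show ((y 0 - A 0) / (B 0 - A 0)) • (B -ᵥ A) 1 + A 1 = y 1
          simp only [vsub_eq_sub, PiLp.smul_apply, PiLp.sub_apply, smul_eq_mul]
          rw [div_mul_eq_mul_div, div_add' _ _ _ hd', div_eq_iff hd']
          unfold gg at h0
          linear_combination -h0
      exact hr ▸ smul_vsub_vadd_mem_affineSpan_pair _ A B
    · have hd' : B 1 - A 1 ≠ 0 := sub_ne_zero.mpr (Ne.symm hd)
      have hr : ((y 1 - A 1) / (B 1 - A 1)) • (B -ᵥ A) +ᵥ A = y := by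
        ext i
        fin_cases i
        · show ((y 1 - A 1) / (B 1 - A 1)) • (B -ᵥ A) 0 + A 0 = y 0
          simp only [vsub_eq_sub, PiLp.smul_apply, PiLp.sub_apply, smul_eq_mul]
          rw [div_mul_eq_mul_div, div_add' _ _ _ hd', div_eq_iff hd']
          unfold gg at h0
          linear_combination h0
        · show ((y 1 - A 1) / (B 1 - A 1)) • (B -ᵥ A) 1 + A 1 = y 1
          simp only [vsub_eq_sub, PiLp.smul_apply, PiLp.sub_apply, smul_eq_mul]
          field_simp
          ring
      exact hr ▸ smul_vsub_vadd_mem_affineSpan_pair _ A B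

/-- The normal vector to the chord. -/
def nvec (A B : Plane) : Plane :=
  (EuclideanSpace.equiv (Fin 2) ℝ).symm ![-(B 1 - A 1), B 0 - A 0]

lemma nvec_apply0 (A B : Plane) : nvec A B 0 = -(B 1 - A 1) := rfl
lemma nvec_apply1 (A B : Plane) : nvec A B 1 = B 0 - A 0 := rfl

lemma gg_sub_smul (A B w : Plane) (c : ℝ) :
    gg A B (w - c • nvec A B) = gg A B w - c * ((B 0 - A 0) ^ 2 + (B 1 - A 1) ^ 2) := by
  unfold gg
  have h0 : (w - c • nvec A B) 0 = w 0 - c * (-(B 1 - A 1)) := by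
    simp [PiLp.sub_apply, PiLp.smul_apply, nvec_apply0]
  have h1 : (w - c • nvec A B) 1 = w 1 - c * (B 0 - A 0) := by
    simp [PiLp.sub_apply, PiLp.smul_apply, nvec_apply1]
  rw [h0, h1]; ring

lemma vsub_proj (A B w : Plane) (c : ℝ) : w -ᵥ (w - c • nvec A B) = c • nvec A B := by
  rw [vsub_eq_sub]; abel

lemma ssameSide_of_sign {A B u v : Plane} (hAB : A ≠ B)
    (h : 0 < gg A B u * gg A B v) :
    (line[ℝ, A, B] : AffineSubspace ℝ Plane).SSameSide u v := by
  have hu : gg A B u ≠ 0 := by intro h0; rw [h0] at h; simp at h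
  have hv : gg A B v ≠ 0 := by intro h0; rw [h0] at h; simp at h
  set N : ℝ := (B 0 - A 0) ^ 2 + (B 1 - A 1) ^ 2 with hN
  have hNpos : 0 < N := by
    rcases plane_ne_iff hAB with hd | hd
    · have : B 0 - A 0 ≠ 0 := sub_ne_zero.mpr (Ne.symm hd)
      nlinarith [sq_pos_of_ne_zero this, sq_nonneg (B 1 - A 1)]
    · have : B 1 - A 1 ≠ 0 := sub_ne_zero.mpr (Ne.symm hd)
      nlinarith [sq_pos_of_ne_zero this, sq_nonneg (B 0 - A 0)]
  set cu : ℝ := gg A B u / N with hcu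
  set cv : ℝ := gg A B v / N with hcv
  have hcu0 : cu ≠ 0 := div_ne_zero hu hNpos.ne'
  have hmemu : u - cu • nvec A B ∈ line[ℝ, A, B] := by
    rw [mem_line_iff hAB, gg_sub_smul, hcu, ← hN]
    field_simp
    ring
  have hmemv : v - cv • nvec A B ∈ line[ℝ, A, B] := by
    rw [mem_line_iff hAB, gg_sub_smul, hcv, ← hN]
    field_simp
    ring
  refine ⟨⟨u - cu • nvec A B, hmemu, v - cv • nvec A B, hmemv, ?_⟩, ?_, ?_⟩
  · rw [vsub_proj, vsub_proj]
    have hratio : 0 < cv / cu := by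
      rcases mul_pos_iff.mp h with ⟨h1, h2⟩ | ⟨h1, h2⟩
      · exact div_pos (by positivity) (by positivity)
      · have h1' : cu < 0 := div_neg_of_neg_of_pos h1 hNpos
        have h2' : cv < 0 := div_neg_of_neg_of_pos h2 hNpos
        exact div_pos_of_neg_of_neg h2' h1'
    have heq : cv • nvec A B = (cv / cu) • (cu • nvec A B) := by
      rw [smul_smul]; congr 1; field_simp
    rw [heq]
    exact SameRay.sameRay_pos_smul_right _ hratio
  · rw [mem_line_iff hAB]; exact hu
  · rw [mem_line_iff hAB]; exact hv

lemma mem_segment_of {A B y : Plane} (hA : ‖A‖ = 1) (hB : ‖B‖ = 1) (hy : ‖y‖ < 1)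
    (hmem : y ∈ line[ℝ, A, B]) : y ∈ segment ℝ A B := by
  have h2 := AffineSubspace.vsub_mem_direction hmem (left_mem_affineSpan_pair ℝ A B)
  rw [direction_affineSpan] at h2
  obtain ⟨r, hr⟩ := mem_vectorSpan_pair_rev.mp h2
  simp only [vsub_eq_sub] at hr
  have hy' : y = (1 - r) • A + r • B := by
    have h3 : y = r • (B - A) + A := by rw [hr]; abel
    rw [h3, smul_sub]; module
  have hr0 : 0 ≤ r := by
    by_contra hneg
    push_neg at hneg
    have h1r : (0:ℝ) < 1 - r := by linarith
    have hA' : A = (1 - r)⁻¹ • y + (-r * (1 - r)⁻¹) • B := by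
      rw [hy']; match_scalars <;> field_simp <;> ring_nf
    have hb1 : ‖A‖ ≤ (1 - r)⁻¹ * ‖y‖ + (-r * (1 - r)⁻¹) * ‖B‖ := by
      calc ‖A‖ = ‖(1 - r)⁻¹ • y + (-r * (1 - r)⁻¹) • B‖ := by rw [← hA']
        _ ≤ ‖(1 - r)⁻¹ • y‖ + ‖(-r * (1 - r)⁻¹) • B‖ := norm_add_le _ _
        _ = (1 - r)⁻¹ * ‖y‖ + (-r * (1 - r)⁻¹) * ‖B‖ := by
            rw [norm_smul, norm_smul, Real.norm_eq_abs, Real.norm_eq_abs,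
              abs_of_pos (inv_pos.mpr h1r),
              abs_of_pos (mul_pos (by linarith : (0:ℝ) < -r) (inv_pos.mpr h1r))]
    have hinv : (0:ℝ) < (1 - r)⁻¹ := inv_pos.mpr h1r
    have hsum : (1 - r)⁻¹ + (-r * (1 - r)⁻¹) = 1 := by
      field_simp
      ring
    rw [hA, hB] at hb1
    nlinarith [mul_lt_mul_of_pos_left hy hinv]
  have hr1 : r ≤ 1 := by
    by_contra hgt
    push_neg at hgt
    have hrpos : (0:ℝ) < r := by linarith
    have hB' : B = r⁻¹ • y + ((r - 1) * r⁻¹) • A := by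
      rw [hy']; match_scalars <;> field_simp <;> ring
    have hb1 : ‖B‖ ≤ r⁻¹ * ‖y‖ + ((r - 1) * r⁻¹) * ‖A‖ := by
      calc ‖B‖ = ‖r⁻¹ • y + ((r - 1) * r⁻¹) • A‖ := by rw [← hB']
        _ ≤ ‖r⁻¹ • y‖ + ‖((r - 1) * r⁻¹) • A‖ := norm_add_le _ _
        _ = r⁻¹ * ‖y‖ + ((r - 1) * r⁻¹) * ‖A‖ := by
            rw [norm_smul, norm_smul, Real.norm_eq_abs, Real.norm_eq_abs,
              abs_of_pos (inv_pos.mpr hrpos),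
              abs_of_pos (mul_pos (by linarith : (0:ℝ) < r - 1) (inv_pos.mpr hrpos))]
    have hinv : (0:ℝ) < r⁻¹ := inv_pos.mpr hrpos
    have hsum : r⁻¹ + (r - 1) * r⁻¹ = 1 := by field_simp; ring
    rw [hA, hB] at hb1
    nlinarith [mul_lt_mul_of_pos_left hy hinv]
  exact hy' ▸ ⟨1 - r, r, by linarith, hr0, by ring, rfl⟩


lemma gg_circ (a b v : ℝ) :
    gg (circpt a) (circpt b) (circpt v) =
      4 * Real.sin (Real.pi * (b - a)) *
        (Real.sin (Real.pi * (v - a)) * Real.sin (Real.pi * (v - b))) := by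
  unfold gg
  rw [circpt_apply0, circpt_apply0, circpt_apply0, circpt_apply1, circpt_apply1, circpt_apply1]
  rw [show 2 * Real.pi * a = 2 * (Real.pi * a) by ring,
      show 2 * Real.pi * b = 2 * (Real.pi * b) by ring,
      show 2 * Real.pi * v = 2 * (Real.pi * v) by ring,
      Real.cos_two_mul, Real.cos_two_mul, Real.cos_two_mul,
      Real.sin_two_mul, Real.sin_two_mul, Real.sin_two_mul,
      show Real.pi * (b - a) = Real.pi * b - Real.pi * a by ring,
      show Real.pi * (v - a) = Real.pi * v - Real.pi * a by ring,
      show Real.pi * (v - b) = Real.pi * v - Real.pi * b by ring,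
      Real.sin_sub, Real.sin_sub, Real.sin_sub]
  have ha := Real.sin_sq_add_cos_sq (Real.pi * a)
  have hb := Real.sin_sq_add_cos_sq (Real.pi * b)
  have hv := Real.sin_sq_add_cos_sq (Real.pi * v)
  set sa := Real.sin (Real.pi * a)
  set ca := Real.cos (Real.pi * a)
  set sb := Real.sin (Real.pi * b)
  set cb := Real.cos (Real.pi * b)
  set ss := Real.sin (Real.pi * v)
  set cs := Real.cos (Real.pi * v)
  linear_combination (-4*ss*cs + 4*sb*cb - 4*sb*cb*ss^2 + 4*sb^2*ss*cs) * ha +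
    (4*ss*cs - 4*sa*ca + 4*sa*ca*ss^2 - 4*sa^2*ss*cs) * hb +
    (-4*sb*cb + 4*sa*ca - 4*sa*ca*sb^2 + 4*sa^2*sb*cb) * hv

lemma sin_pi_pos {d : ℝ} (h0 : 0 < d) (h1 : d < 1) : 0 < Real.sin (Real.pi * d) := by
  apply Real.sin_pos_of_pos_of_lt_pi
  · positivity
  · nlinarith [Real.pi_pos]

lemma sin_pi_neg {d : ℝ} (h0 : -1 < d) (h1 : d < 0) : Real.sin (Real.pi * d) < 0 := by
  have h := sin_pi_pos (d := -d) (by linarith) (by linarith)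
  have : Real.sin (Real.pi * -d) = -Real.sin (Real.pi * d) := by
    rw [show Real.pi * -d = -(Real.pi * d) by ring, Real.sin_neg]
  rw [this] at h
  linarith

lemma gg_pos₁ {a b v : ℝ} (hab0 : 0 < b - a) (hab1 : b - a < 1)
    (h1 : 0 < v - a) (h2 : v - a < 1) (h3 : 0 < v - b) (h4 : v - b < 1) :
    0 < gg (circpt a) (circpt b) (circpt v) := by
  rw [gg_circ]
  have s1 := sin_pi_pos hab0 hab1
  have s2 := sin_pi_pos h1 h2
  have s3 := sin_pi_pos h3 h4
  positivity

lemma gg_pos₂ {a b v : ℝ} (hab0 : 0 < b - a) (hab1 : b - a < 1)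
    (h1 : -1 < v - a) (h2 : v - a < 0) (h3 : -1 < v - b) (h4 : v - b < 0) :
    0 < gg (circpt a) (circpt b) (circpt v) := by
  rw [gg_circ]
  have s1 := sin_pi_pos hab0 hab1
  have s2 := sin_pi_neg h1 h2
  have s3 := sin_pi_neg h3 h4
  nlinarith [mul_pos s1 (mul_pos_of_neg_of_neg s2 s3)]

lemma gg_neg {a b v : ℝ} (hab0 : 0 < b - a) (hab1 : b - a < 1)
    (h1 : 0 < v - a) (h2 : v - a < 1) (h3 : -1 < v - b) (h4 : v - b < 0) :
    gg (circpt a) (circpt b) (circpt v) < 0 := by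
  rw [gg_circ]
  have s1 := sin_pi_pos hab0 hab1
  have s2 := sin_pi_pos h1 h2
  have s3 := sin_pi_neg h3 h4
  nlinarith [mul_pos s1 (mul_pos s2 (neg_pos.mpr s3))]

/-- Any point of the unit circle is `circpt u` for some `u ∈ [0,1)`. -/
lemma exists_circpt {z : Plane} (hz : ‖z‖ = 1) : ∃ u, 0 ≤ u ∧ u < 1 ∧ circpt u = z := by
  have hz2 : z 0 ^ 2 + z 1 ^ 2 = 1 := by rw [← norm_sq_plane, hz]; norm_num
  set ζ : ℂ := ⟨z 0, z 1⟩ with hζ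
  have habs : ‖ζ‖ = 1 := by
    rw [Complex.norm_def, Complex.normSq_mk]
    rw [show z 0 * z 0 + z 1 * z 1 = 1 by nlinarith]
    exact Real.sqrt_one
  have hζ0 : ζ ≠ 0 := by
    intro h; rw [h] at habs; simp at habs
  set u₀ : ℝ := ζ.arg / (2 * Real.pi) with hu₀
  refine ⟨Int.fract u₀, Int.fract_nonneg _, Int.fract_lt_one _, ?_⟩
  have harg : 2 * Real.pi * u₀ = ζ.arg := by
    rw [hu₀]; field_simp
  have hcos : Real.cos (2 * Real.pi * Int.fract u₀) = z 0 := by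
    rw [Int.fract, show 2 * Real.pi * (u₀ - ⌊u₀⌋) = 2 * Real.pi * u₀ + (-⌊u₀⌋ : ℤ) * (2 * Real.pi) by push_cast; ring,
      Real.cos_add_int_mul_two_pi, harg, Complex.cos_arg hζ0, habs]
    simp [hζ]
  have hsin : Real.sin (2 * Real.pi * Int.fract u₀) = z 1 := by
    rw [Int.fract, show 2 * Real.pi * (u₀ - ⌊u₀⌋) = 2 * Real.pi * u₀ + (-⌊u₀⌋ : ℤ) * (2 * Real.pi) by push_cast; ring,
      Real.sin_add_int_mul_two_pi, harg, Complex.sin_arg, habs]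
    simp [hζ]
  ext i
  fin_cases i
  · show circpt (Int.fract u₀) 0 = z 0
    rw [circpt_apply0, hcos]
  · show circpt (Int.fract u₀) 1 = z 1
    rw [circpt_apply1, hsin]

/-- The second intersection of the ray from a circle point `P` through an interior
point `w` with the unit circle, as `circpt u`. -/
lemma ray_hits (P w : Plane) (hP : ‖P‖ = 1) (hw : ‖w‖ < 1) :
    ∃ u μ : ℝ, 0 ≤ u ∧ u < 1 ∧ 0 < μ ∧ circpt u = P + μ • (w - P) := by
  have hP2 : P 0 ^ 2 + P 1 ^ 2 = 1 := by rw [← norm_sq_plane, hP]; norm_num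
  have hw2 : w 0 ^ 2 + w 1 ^ 2 < 1 := by
    rw [← norm_sq_plane]; nlinarith [norm_nonneg w]
  set D : ℝ := (w 0 - P 0) ^ 2 + (w 1 - P 1) ^ 2 with hD
  set Bq : ℝ := P 0 * (w 0 - P 0) + P 1 * (w 1 - P 1) with hBq
  have hDpos : 0 < D := by
    rcases eq_or_lt_of_le (by positivity : (0:ℝ) ≤ D) with h | h
    · exfalso
      have h0 : w 0 = P 0 := by nlinarith [sq_nonneg (w 0 - P 0), sq_nonneg (w 1 - P 1)]
      have h1 : w 1 = P 1 := by nlinarith [sq_nonneg (w 0 - P 0), sq_nonneg (w 1 - P 1)]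
      rw [h0, h1] at hw2; linarith
    · exact h
  have hBneg : 2 * Bq + D < 0 := by nlinarith
  set μ : ℝ := -2 * Bq / D with hμdef
  have hμpos : 0 < μ := by
    rw [hμdef]
    apply div_pos (by linarith) hDpos
  have hμD : μ * D = -2 * Bq := by
    rw [hμdef]; field_simp
  set z : Plane := P + μ • (w - P) with hzdef
  have hz0 : z 0 = P 0 + μ * (w 0 - P 0) := by
    simp [hzdef, PiLp.add_apply, PiLp.smul_apply, PiLp.sub_apply]
  have hz1 : z 1 = P 1 + μ * (w 1 - P 1) := by
    simp [hzdef, PiLp.add_apply, PiLp.smul_apply, PiLp.sub_apply]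
  have hznorm : ‖z‖ = 1 := by
    have hsq : ‖z‖ ^ 2 = 1 := by
      have hμD' : μ * ((w 0 - P 0) ^ 2 + (w 1 - P 1) ^ 2) =
          -2 * (P 0 * (w 0 - P 0) + P 1 * (w 1 - P 1)) := by
        rw [← hD, ← hBq]; exact hμD
      rw [norm_sq_plane, hz0, hz1]
      linear_combination hP2 + μ * hμD'
    nlinarith [norm_nonneg z]
  obtain ⟨u, hu0, hu1, hu⟩ := exists_circpt hznorm
  exact ⟨u, μ, hu0, hu1, hμpos, hu⟩

end RegionCovering

open RegionCovering

set_option maxHeartbeats 1600000 in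
/-- covering lemma. -/
theorem region_covering (k : ℕ) (hk : 5 ≤ k) (x : ℕ → ℝ)
    (hx0 : ∀ j, 0 ≤ x j) (hx1 : ∑ j ∈ Finset.range (2 * (k - 2)), x j = 1)
    (F : Set Plane) (hconn : IsConnected F) (hdisk : ∀ y ∈ F, ‖y‖ < 1)
    (hdisj : ∀ j < k - 2, Disjoint F (chordSeg k x j)) :
    ∃ i, 1 ≤ i ∧ i ≤ 2 * (k - 2) ∧
      (∀ j ∈ ({i - 1, i} : Set ℕ), chordNondeg k x j →
        ∀ y ∈ F, (chordLine k x j).SSameSide y (arcMid x i)) ∧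
      (∀ j < 2 * (k - 2), chordNondeg k x j → openArc x i ⊆ chordSeg k x j →
        ∃ z, z ∉ chordLine k x j ∧ ∀ y ∈ F, (chordLine k x j).SSameSide y z) := by
  classical
  obtain ⟨y₀, hy₀F⟩ := hconn.nonempty
  set m : ℕ := k - 2 with hmdef
  have hm3 : 3 ≤ m := by omega
  set t : ℕ → ℝ := tpar x with htdef
  have hmono : ∀ {e e' : ℕ}, e ≤ e' → t e ≤ t e' := by
    intro e e' h
    rw [htdef]
    unfold tpar
    exact Finset.sum_le_sum_of_subset_of_nonneg (Finset.range_subset_range.mpr h)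
      (fun j _ _ => hx0 j)
  have ht0 : t 0 = 0 := by rw [htdef]; simp [tpar]
  have ht1 : t (2 * m) = 1 := by rw [htdef, hmdef]; exact hx1
  have hlb : ∀ e, 0 ≤ t e := fun e => by rw [← ht0]; exact hmono (Nat.zero_le e)
  have hub : ∀ e, e ≤ 2 * m → t e ≤ 1 := fun e he => by rw [← ht1]; exact hmono he
  have hndiff : ∀ j, chordNondeg k x j ↔ circpt (t (j % m)) ≠ circpt (t (j % m + m)) := by
    intro j; rw [htdef, hmdef]; exact Iff.rfl
  have hlineEq : ∀ j, chordLine k x j =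
      line[ℝ, circpt (t (j % m)), circpt (t (j % m + m))] := by
    intro j; rw [htdef, hmdef]; rfl
  have hsegEq : ∀ c, c < m →
      chordSeg k x c = segment ℝ (circpt (t c)) (circpt (t (c + m))) := by
    intro c hc
    rw [htdef, hmdef]
    unfold chordSeg
    rw [Nat.mod_eq_of_lt (by omega : c < k - 2)]
  have harcmid : ∀ i : ℕ, arcMid x i = circpt ((t (i - 1) + t i) / 2) := by
    intro i; rw [htdef]; rfl
  have hchordlt : ∀ c, c < m → circpt (t c) ≠ circpt (t (c + m)) →
      0 < t (c + m) - t c ∧ t (c + m) - t c < 1 := by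
    intro c hc hnd
    have h1 : t c ≤ t (c + m) := hmono (by omega)
    have h2 : t (c + m) ≤ 1 := hub _ (by omega)
    have h3 : 0 ≤ t c := hlb c
    rcases eq_or_lt_of_le h1 with he | hlt
    · exact absurd (by rw [he]) hnd
    refine ⟨by linarith, ?_⟩
    rcases eq_or_lt_of_le (show t (c + m) - t c ≤ 1 by linarith) with he | h
    · exfalso
      apply hnd
      have hval : t (c + m) = t c + 1 := by linarith
      rw [hval, show (t c + 1 : ℝ) = t c + ((1:ℤ):ℝ) by norm_num, circpt_add_int]
    · exact h
  have hGF : ∀ c, c < m → circpt (t c) ≠ circpt (t (c + m)) →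
      ∀ y ∈ F, gg (circpt (t c)) (circpt (t (c + m))) y ≠ 0 := by
    intro c hc hnd y hyF h0
    have hmem := (mem_line_iff hnd y).mpr h0
    have hseg := mem_segment_of (norm_circpt _) (norm_circpt _) (hdisk y hyF) hmem
    exact Set.disjoint_left.mp (hdisj c (by omega)) hyF (by rw [hsegEq c hc]; exact hseg)
  have hGsign : ∀ c, c < m → circpt (t c) ≠ circpt (t (c + m)) → ∀ y ∈ F,
      0 < gg (circpt (t c)) (circpt (t (c + m))) y *
          gg (circpt (t c)) (circpt (t (c + m))) y₀ := by
    intro c hc hnd y hyF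
    have hne := hGF c hc hnd
    have hco : ContinuousOn (gg (circpt (t c)) (circpt (t (c + m)))) F :=
      (gg_cont _ _).continuousOn
    rcases lt_trichotomy (gg (circpt (t c)) (circpt (t (c + m))) y) 0 with hy | hy | hy
    · rcases lt_trichotomy (gg (circpt (t c)) (circpt (t (c + m))) y₀) 0 with h0 | h0 | h0
      · exact mul_pos_of_neg_of_neg hy h0
      · exact absurd h0 (hne y₀ hy₀F)
      · exfalso
        obtain ⟨p, hpF, hp⟩ :=
          hconn.isPreconnected.intermediate_value hyF hy₀F hco ⟨hy.le, h0.le⟩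
        exact hne p hpF hp
    · exact absurd hy (hne y hyF)
    · rcases lt_trichotomy (gg (circpt (t c)) (circpt (t (c + m))) y₀) 0 with h0 | h0 | h0
      · exfalso
        obtain ⟨p, hpF, hp⟩ :=
          hconn.isPreconnected.intermediate_value hy₀F hyF hco ⟨h0.le, hy.le⟩
        exact hne p hpF hp
      · exact absurd h0 (hne y₀ hy₀F)
      · exact mul_pos hy h0
  have hsgn_pos : ∀ c i (v : ℝ), c < m → circpt (t c) ≠ circpt (t (c + m)) →
      1 ≤ i → i ≤ 2 * m → t (i - 1) < v → v < t i → (c + m ≤ i - 1 ∨ i ≤ c) →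
      0 < gg (circpt (t c)) (circpt (t (c + m))) (circpt v) := by
    intro c i v hc hnd hi1 hi2 hv1 hv2 hcase
    obtain ⟨hd0, hd1⟩ := hchordlt c hc hnd
    have hv0 : 0 < v := (hlb (i - 1)).trans_lt hv1
    have hvlt : v < 1 := hv2.trans_le (hub i hi2)
    rcases hcase with h | h
    · have h1 : t (c + m) ≤ t (i - 1) := hmono h
      have h2 : t c ≤ t (c + m) := hmono (by omega)
      have h3 : 0 ≤ t c := hlb c
      exact gg_pos₁ hd0 hd1 (by linarith) (by linarith) (by linarith) (by linarith)
    · have h1 : t i ≤ t c := hmono h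
      have h2 : t i ≤ t (c + m) := hmono (by omega)
      have h3 : t c ≤ 1 := hub c (by omega)
      have h4 : t (c + m) ≤ 1 := hub _ (by omega)
      exact gg_pos₂ hd0 hd1 (by linarith) (by linarith) (by linarith) (by linarith)
  have hsgn_neg : ∀ c i (v : ℝ), c < m → circpt (t c) ≠ circpt (t (c + m)) →
      1 ≤ i → i ≤ 2 * m → t (i - 1) < v → v < t i → c ≤ i - 1 → i ≤ c + m →
      gg (circpt (t c)) (circpt (t (c + m))) (circpt v) < 0 := by
    intro c i v hc hnd hi1 hi2 hv1 hv2 hc1 hc2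
    obtain ⟨hd0, hd1⟩ := hchordlt c hc hnd
    have hv0 : 0 < v := (hlb (i - 1)).trans_lt hv1
    have hvlt : v < 1 := hv2.trans_le (hub i hi2)
    have h1 : t c ≤ t (i - 1) := hmono hc1
    have h2 : t i ≤ t (c + m) := hmono hc2
    have h3 : 0 ≤ t c := hlb c
    have h4 : t (c + m) ≤ 1 := hub _ (by omega)
    exact gg_neg hd0 hd1 (by linarith) (by linarith) (by linarith) (by linarith)
  suffices hmain : ∃ i, 1 ≤ i ∧ i ≤ 2 * m ∧
      (∀ j, (j = i - 1 ∨ j = i) → chordNondeg k x j →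
        0 < gg (circpt (t (j % m))) (circpt (t (j % m + m))) (arcMid x i) *
            gg (circpt (t (j % m))) (circpt (t (j % m + m))) y₀) by
    obtain ⟨i, hi1, hi2, hH⟩ := hmain
    refine ⟨i, hi1, hi2, ?_, ?_⟩
    · intro j hj hnd y hyF
      have hj' : j = i - 1 ∨ j = i := by simpa using hj
      have hcm : j % m < m := Nat.mod_lt _ (by omega)
      have hndc : circpt (t (j % m)) ≠ circpt (t (j % m + m)) := (hndiff j).mp hnd
      have h1 := hH j hj' hnd
      have h2 := hGsign (j % m) hcm hndc y hyF
      rw [hlineEq j]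
      apply ssameSide_of_sign hndc
      have hb := hGF (j % m) hcm hndc y₀ hy₀F
      nlinarith [mul_pos h1 h2, sq_pos_of_ne_zero hb]
    · intro j hj2 hnd _
      have hcm : j % m < m := Nat.mod_lt _ (by omega)
      have hndc := (hndiff j).mp hnd
      refine ⟨y₀, ?_, ?_⟩
      · rw [hlineEq j]
        intro hmem
        exact hGF _ hcm hndc y₀ hy₀F ((mem_line_iff hndc _).mp hmem)
      · intro y hyF
        rw [hlineEq j]
        exact ssameSide_of_sign hndc (hGsign _ hcm hndc y hyF)
  by_cases hA : ∀ c, c < m → circpt (t c) ≠ circpt (t (c + m))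
  · -- Case A : all chords are nondegenerate
    have hwedge : ∀ c₁ c₂, c₁ < m → c₂ < m → ∀ τ : ℝ,
        (circpt (t c₁) = circpt τ ∨ circpt (t (c₁ + m)) = circpt τ) →
        (circpt (t c₂) = circpt τ ∨ circpt (t (c₂ + m)) = circpt τ) →
        ∃ u μ : ℝ, 0 ≤ u ∧ u < 1 ∧ 0 < μ ∧
          gg (circpt (t c₁)) (circpt (t (c₁ + m))) (circpt u) =
            μ * gg (circpt (t c₁)) (circpt (t (c₁ + m))) y₀ ∧
          gg (circpt (t c₂)) (circpt (t (c₂ + m))) (circpt u) =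
            μ * gg (circpt (t c₂)) (circpt (t (c₂ + m))) y₀ := by
      intro c₁ c₂ h1 h2 τ he1 he2
      obtain ⟨u, μ, hu0, hu1, hμ, hu⟩ :=
        ray_hits (circpt τ) y₀ (norm_circpt τ) (hdisk y₀ hy₀F)
      have hz : ∀ c, c < m → (circpt (t c) = circpt τ ∨ circpt (t (c + m)) = circpt τ) →
          gg (circpt (t c)) (circpt (t (c + m))) (circpt u) =
            μ * gg (circpt (t c)) (circpt (t (c + m))) y₀ := by
        intro c hc he
        rw [hu, gg_affine]
        rcases he with h | h
        · rw [← h, gg_left]; ring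
        · rw [← h, gg_right]; ring
      exact ⟨u, μ, hu0, hu1, hμ, hz c₁ h1 he1, hz c₂ h2 he2⟩
    have hss : ∀ e (u : ℝ), e ≤ 2 * m → 0 ≤ u → u < 1 →
        (0 < Real.sin (Real.pi * (u - t e)) → t e < u) ∧
        (Real.sin (Real.pi * (u - t e)) < 0 → u < t e) := by
      intro e u he hu0 hu1
      have hb0 : 0 ≤ t e := hlb e
      have hb1 : t e ≤ 1 := hub e he
      constructor
      · intro hpos
        by_contra hle
        push_neg at hle
        rcases eq_or_lt_of_le hle with h | h
        · rw [h, sub_self, mul_zero, Real.sin_zero] at hpos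
          exact lt_irrefl 0 hpos
        · rcases eq_or_lt_of_le (show (-1:ℝ) ≤ u - t e by linarith) with h2 | h2
          · rw [show Real.pi * (u - t e) = -Real.pi by rw [← h2]; ring,
              Real.sin_neg, Real.sin_pi] at hpos
            norm_num at hpos
          · have := sin_pi_neg h2 (by linarith)
            linarith
      · intro hneg
        by_contra hle
        push_neg at hle
        rcases eq_or_lt_of_le hle with h | h
        · rw [← h, sub_self, mul_zero, Real.sin_zero] at hneg
          exact lt_irrefl 0 hneg
        · rcases eq_or_lt_of_le (show u - t e ≤ 1 by linarith) with h2 | h2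
          · rw [h2, mul_one, Real.sin_pi] at hneg
            exact lt_irrefl 0 hneg
          · have := sin_pi_pos (by linarith) h2
            linarith
    have hfac : ∀ c (u : ℝ), c < m →
        (0 < gg (circpt (t c)) (circpt (t (c + m))) (circpt u) →
          0 < Real.sin (Real.pi * (u - t c)) * Real.sin (Real.pi * (u - t (c + m)))) ∧
        (gg (circpt (t c)) (circpt (t (c + m))) (circpt u) < 0 →
          Real.sin (Real.pi * (u - t c)) * Real.sin (Real.pi * (u - t (c + m))) < 0) := by
      intro c u hc
      obtain ⟨hd0, hd1⟩ := hchordlt c hc (hA c hc)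
      have hs1 := sin_pi_pos hd0 hd1
      constructor
      · intro h
        rw [gg_circ] at h
        nlinarith [hs1, h]
      · intro h
        rw [gg_circ] at h
        nlinarith [hs1, h]
    have hHgen : ∀ i c, 1 ≤ i → i ≤ 2 * m → t (i - 1) < t i → c < m →
        ((c + m ≤ i - 1 ∨ i ≤ c) ∧
            0 < gg (circpt (t c)) (circpt (t (c + m))) y₀ ∨
          (c ≤ i - 1 ∧ i ≤ c + m) ∧
            gg (circpt (t c)) (circpt (t (c + m))) y₀ < 0) →
        0 < gg (circpt (t c)) (circpt (t (c + m))) (arcMid x i) *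
            gg (circpt (t c)) (circpt (t (c + m))) y₀ := by
      intro i c h1 h2 harc hcm hcase
      have hnd := hA _ hcm
      have hv1 : t (i - 1) < (t (i - 1) + t i) / 2 := by linarith
      have hv2 : (t (i - 1) + t i) / 2 < t i := by linarith
      rw [harcmid i]
      rcases hcase with ⟨hpos, hsgn⟩ | ⟨⟨ha, hb⟩, hsgn⟩
      · exact mul_pos (hsgn_pos _ i _ hcm hnd h1 h2 hv1 hv2 hpos) hsgn
      · exact mul_pos_of_neg_of_neg (hsgn_neg _ i _ hcm hnd h1 h2 hv1 hv2 ha hb) hsgn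
    by_cases hflip : ∃ j, j + 1 < m ∧
        ¬((0 < gg (circpt (t j)) (circpt (t (j + m))) y₀) ↔
          (0 < gg (circpt (t (j + 1))) (circpt (t (j + 1 + m))) y₀))
    · obtain ⟨j, hjm, hne⟩ := hflip
      have hndj := hA j (by omega)
      have hndj1 := hA (j + 1) (by omega)
      have hGj := hGF j (by omega) hndj y₀ hy₀F
      have hGj1 := hGF (j + 1) (by omega) hndj1 y₀ hy₀F
      by_cases hpj : 0 < gg (circpt (t j)) (circpt (t (j + m))) y₀
      · -- ascent : i = m + j + 1
        have hpj1 : gg (circpt (t (j + 1))) (circpt (t (j + 1 + m))) y₀ < 0 := by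
          rcases lt_trichotomy (gg (circpt (t (j + 1))) (circpt (t (j + 1 + m))) y₀) 0
            with h | h | h
          · exact h
          · exact absurd h hGj1
          · exact absurd (iff_of_true hpj h) hne
        have harc : t (m + j + 1 - 1) < t (m + j + 1) := by
          rw [show m + j + 1 - 1 = m + j from by omega]
          rcases eq_or_lt_of_le (hmono (show m + j ≤ m + j + 1 by omega)) with heqt | h
          swap
          · exact h
          exfalso
          have he1 : circpt (t (j + m)) = circpt (t (m + j)) := by
            rw [show j + m = m + j from Nat.add_comm j m]
          have he2 : circpt (t (j + 1 + m)) = circpt (t (m + j)) := by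
            rw [show j + 1 + m = m + j + 1 from by omega, ← heqt]
          obtain ⟨u, μ, hu0, hu1, hμ, heq1, heq2⟩ :=
            hwedge j (j + 1) (by omega) (by omega) (t (m + j)) (Or.inr he1) (Or.inr he2)
          have hg1 : 0 < gg (circpt (t j)) (circpt (t (j + m))) (circpt u) := by
            rw [heq1]; exact mul_pos hμ hpj
          have hg2 : gg (circpt (t (j + 1))) (circpt (t (j + 1 + m))) (circpt u) < 0 := by
            rw [heq2]; exact mul_neg_of_pos_of_neg hμ hpj1
          have hf1 := (hfac j u (by omega)).1 hg1
          have hf2 := (hfac (j + 1) u (by omega)).2 hg2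
          rw [show j + m = m + j from Nat.add_comm j m] at hf1
          rw [show j + 1 + m = m + j + 1 from by omega, ← heqt] at hf2
          rcases lt_trichotomy (Real.sin (Real.pi * (u - t (m + j)))) 0 with hq | hq | hq
          · have hp : Real.sin (Real.pi * (u - t j)) < 0 := by nlinarith [hf1, hq]
            have hp' : 0 < Real.sin (Real.pi * (u - t (j + 1))) := by nlinarith [hf2, hq]
            have o1 := (hss j u (by omega) hu0 hu1).2 hp
            have o2 := (hss (j + 1) u (by omega) hu0 hu1).1 hp'
            have o3 := hmono (show j ≤ j + 1 by omega)
            linarith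
          · rw [hq, mul_zero] at hf1
            exact lt_irrefl 0 hf1
          · have hp' : Real.sin (Real.pi * (u - t (j + 1))) < 0 := by nlinarith [hf2, hq]
            have o1 := (hss (j + 1) u (by omega) hu0 hu1).2 hp'
            have o2 := (hss (m + j) u (by omega) hu0 hu1).1 hq
            have o3 := hmono (show j + 1 ≤ m + j by omega)
            linarith
        refine ⟨m + j + 1, by omega, by omega, ?_⟩
        intro j' hj' _
        rcases hj' with h' | h'
        · rw [h', show (m + j + 1 - 1) % m = j from by
            rw [show m + j + 1 - 1 = m + j from by omega, Nat.add_mod_left,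
              Nat.mod_eq_of_lt (by omega)]]
          exact hHgen (m + j + 1) j (by omega) (by omega) harc (by omega)
            (Or.inl ⟨Or.inl (by omega), hpj⟩)
        · rw [h', show (m + j + 1) % m = j + 1 from by
            rw [show m + j + 1 = m + (j + 1) from by omega, Nat.add_mod_left,
              Nat.mod_eq_of_lt (by omega)]]
          exact hHgen (m + j + 1) (j + 1) (by omega) (by omega) harc (by omega)
            (Or.inr ⟨⟨by omega, by omega⟩, hpj1⟩)
      · -- descent : i = j + 1
        have hpj' : gg (circpt (t j)) (circpt (t (j + m))) y₀ < 0 := by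
          rcases lt_trichotomy (gg (circpt (t j)) (circpt (t (j + m))) y₀) 0 with h | h | h
          · exact h
          · exact absurd h hGj
          · exact absurd h hpj
        have hpj1 : 0 < gg (circpt (t (j + 1))) (circpt (t (j + 1 + m))) y₀ := by
          rcases lt_trichotomy (gg (circpt (t (j + 1))) (circpt (t (j + 1 + m))) y₀) 0
            with h | h | h
          · exact absurd (iff_of_false hpj (by linarith)) hne
          · exact absurd h hGj1
          · exact h
        have harc : t (j + 1 - 1) < t (j + 1) := by
          rw [show j + 1 - 1 = j from by omega]
          rcases eq_or_lt_of_le (hmono (show j ≤ j + 1 by omega)) with heqt | h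
          swap
          · exact h
          exfalso
          have he2 : circpt (t (j + 1)) = circpt (t j) := by rw [← heqt]
          obtain ⟨u, μ, hu0, hu1, hμ, heq1, heq2⟩ :=
            hwedge j (j + 1) (by omega) (by omega) (t j) (Or.inl rfl) (Or.inl he2)
          have hg1 : gg (circpt (t j)) (circpt (t (j + m))) (circpt u) < 0 := by
            rw [heq1]; exact mul_neg_of_pos_of_neg hμ hpj'
          have hg2 : 0 < gg (circpt (t (j + 1))) (circpt (t (j + 1 + m))) (circpt u) := by
            rw [heq2]; exact mul_pos hμ hpj1
          have hf1 := (hfac j u (by omega)).2 hg1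
          have hf2 := (hfac (j + 1) u (by omega)).1 hg2
          rw [← heqt] at hf2
          rcases lt_trichotomy (Real.sin (Real.pi * (u - t j))) 0 with hp | hp | hp
          · have hq : 0 < Real.sin (Real.pi * (u - t (j + m))) := by nlinarith [hf1, hp]
            have o1 := (hss j u (by omega) hu0 hu1).2 hp
            have o2 := (hss (j + m) u (by omega) hu0 hu1).1 hq
            have o3 := hmono (show j ≤ j + m by omega)
            linarith
          · rw [hp, zero_mul] at hf1
            exact lt_irrefl 0 hf1
          · have hq : Real.sin (Real.pi * (u - t (j + m))) < 0 := by nlinarith [hf1, hp]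
            have hr : 0 < Real.sin (Real.pi * (u - t (j + 1 + m))) := by nlinarith [hf2, hp]
            have o1 := (hss (j + m) u (by omega) hu0 hu1).2 hq
            have o2 := (hss (j + 1 + m) u (by omega) hu0 hu1).1 hr
            have o3 := hmono (show j + m ≤ j + 1 + m by omega)
            linarith
        refine ⟨j + 1, by omega, by omega, ?_⟩
        intro j' hj' _
        rcases hj' with h' | h'
        · rw [h', show (j + 1 - 1) % m = j from by
            rw [show j + 1 - 1 = j from by omega, Nat.mod_eq_of_lt (by omega)]]
          exact hHgen (j + 1) j (by omega) (by omega) harc (by omega)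
            (Or.inr ⟨⟨by omega, by omega⟩, hpj'⟩)
        · rw [h', show (j + 1) % m = j + 1 from Nat.mod_eq_of_lt (by omega)]
          exact hHgen (j + 1) (j + 1) (by omega) (by omega) harc (by omega)
            (Or.inl ⟨Or.inr (by omega), hpj1⟩)
    · -- no flip : the sign is constant
      push_neg at hflip
      have hcst : ∀ c, c < m → ((0 < gg (circpt (t c)) (circpt (t (c + m))) y₀) ↔
          (0 < gg (circpt (t 0)) (circpt (t (0 + m))) y₀)) := by
        intro c
        induction c with
        | zero => intro _; exact Iff.rfl
        | succ n ih =>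
          intro hc
          exact (hflip n (by omega)).symm.trans (ih (by omega))
      by_cases h0 : 0 < gg (circpt (t 0)) (circpt (t (0 + m))) y₀
      · -- all positive : i = 2m
        have hpm1 : 0 < gg (circpt (t (m - 1))) (circpt (t (m - 1 + m))) y₀ :=
          (hcst (m - 1) (by omega)).mpr h0
        have harc : t (2 * m - 1) < t (2 * m) := by
          rcases eq_or_lt_of_le (hmono (show 2 * m - 1 ≤ 2 * m by omega)) with heqt | h
          swap
          · exact h
          exfalso
          have he1 : circpt (t (m - 1 + m)) = circpt (t (2 * m - 1)) := by
            rw [show m - 1 + m = 2 * m - 1 from by omega]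
          have he2 : circpt (t 0) = circpt (t (2 * m - 1)) := by
            rw [ht0, heqt, ht1]
            exact circpt_one.symm
          obtain ⟨u, μ, hu0, hu1, hμ, heq1, heq2⟩ :=
            hwedge (m - 1) 0 (by omega) (by omega) (t (2 * m - 1)) (Or.inr he1) (Or.inl he2)
          have hg1 : 0 < gg (circpt (t (m - 1))) (circpt (t (m - 1 + m))) (circpt u) := by
            rw [heq1]; exact mul_pos hμ hpm1
          have hg2 : 0 < gg (circpt (t 0)) (circpt (t (0 + m))) (circpt u) := by
            rw [heq2]; exact mul_pos hμ h0
          have hf1 := (hfac (m - 1) u (by omega)).1 hg1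
          have hf2 := (hfac 0 u (by omega)).1 hg2
          rw [show m - 1 + m = 2 * m - 1 from by omega, heqt] at hf1
          rcases lt_trichotomy (Real.sin (Real.pi * (u - t (2 * m)))) 0 with hq | hq | hq
          · have hp : Real.sin (Real.pi * (u - t (m - 1))) < 0 := by nlinarith [hf1, hq]
            have o1 := (hss (m - 1) u (by omega) hu0 hu1).2 hp
            rcases lt_trichotomy (Real.sin (Real.pi * (u - t 0))) 0 with hp0 | hp0 | hp0
            · have o2 := (hss 0 u (by omega) hu0 hu1).2 hp0
              rw [ht0] at o2
              linarith
            · rw [hp0, zero_mul] at hf2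
              exact lt_irrefl 0 hf2
            · have hq0 : 0 < Real.sin (Real.pi * (u - t (0 + m))) := by nlinarith [hf2, hp0]
              have o2 := (hss (0 + m) u (by omega) hu0 hu1).1 hq0
              have o3 := hmono (show m - 1 ≤ 0 + m by omega)
              linarith
          · rw [hq, mul_zero] at hf1
            exact lt_irrefl 0 hf1
          · have o1 := (hss (2 * m) u (by omega) hu0 hu1).1 hq
            rw [ht1] at o1
            linarith
        refine ⟨2 * m, by omega, by omega, ?_⟩
        intro j' hj' _
        rcases hj' with h' | h'
        · rw [h', show (2 * m - 1) % m = m - 1 from by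
            rw [show 2 * m - 1 = m + (m - 1) from by omega, Nat.add_mod_left,
              Nat.mod_eq_of_lt (by omega)]]
          exact hHgen (2 * m) (m - 1) (by omega) (by omega) harc (by omega)
            (Or.inl ⟨Or.inl (by omega), hpm1⟩)
        · rw [h', show (2 * m) % m = 0 from Nat.mul_mod_left 2 m]
          exact hHgen (2 * m) 0 (by omega) (by omega) harc (by omega)
            (Or.inl ⟨Or.inl (by omega), h0⟩)
      · -- all negative : i = m
        have h0' : gg (circpt (t 0)) (circpt (t (0 + m))) y₀ < 0 := by
          rcases lt_trichotomy (gg (circpt (t 0)) (circpt (t (0 + m))) y₀) 0 with h | h | h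
          · exact h
          · exact absurd h (hGF 0 (by omega) (hA 0 (by omega)) y₀ hy₀F)
          · exact absurd h h0
        have hpm1 : gg (circpt (t (m - 1))) (circpt (t (m - 1 + m))) y₀ < 0 := by
          rcases lt_trichotomy (gg (circpt (t (m - 1))) (circpt (t (m - 1 + m))) y₀) 0
            with h | h | h
          · exact h
          · exact absurd h (hGF (m - 1) (by omega) (hA (m - 1) (by omega)) y₀ hy₀F)
          · exact absurd ((hcst (m - 1) (by omega)).mp h) h0
        have harc : t (m - 1) < t m := by
          rcases eq_or_lt_of_le (hmono (show m - 1 ≤ m by omega)) with heqt | h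
          swap
          · exact h
          exfalso
          have he2 : circpt (t (0 + m)) = circpt (t (m - 1)) := by
            rw [show (0:ℕ) + m = m from by omega, ← heqt]
          obtain ⟨u, μ, hu0, hu1, hμ, heq1, heq2⟩ :=
            hwedge (m - 1) 0 (by omega) (by omega) (t (m - 1)) (Or.inl rfl) (Or.inr he2)
          have hg1 : gg (circpt (t (m - 1))) (circpt (t (m - 1 + m))) (circpt u) < 0 := by
            rw [heq1]; exact mul_neg_of_pos_of_neg hμ hpm1
          have hg2 : gg (circpt (t 0)) (circpt (t (0 + m))) (circpt u) < 0 := by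
            rw [heq2]; exact mul_neg_of_pos_of_neg hμ h0'
          have hf1 := (hfac (m - 1) u (by omega)).2 hg1
          have hf2 := (hfac 0 u (by omega)).2 hg2
          rw [show (0:ℕ) + m = m from by omega, ← heqt] at hf2
          rcases lt_trichotomy (Real.sin (Real.pi * (u - t 0))) 0 with hp0 | hp0 | hp0
          · have o2 := (hss 0 u (by omega) hu0 hu1).2 hp0
            rw [ht0] at o2
            linarith
          · rw [hp0, zero_mul] at hf2
            exact lt_irrefl 0 hf2
          · have hp : Real.sin (Real.pi * (u - t (m - 1))) < 0 := by nlinarith [hf2, hp0]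
            have o1 := (hss (m - 1) u (by omega) hu0 hu1).2 hp
            have hq : 0 < Real.sin (Real.pi * (u - t (m - 1 + m))) := by nlinarith [hf1, hp]
            have o2 := (hss (m - 1 + m) u (by omega) hu0 hu1).1 hq
            have o3 := hmono (show m - 1 ≤ m - 1 + m by omega)
            linarith
        refine ⟨m, by omega, by omega, ?_⟩
        intro j' hj' _
        rcases hj' with h' | h'
        · rw [h', show (m - 1) % m = m - 1 from Nat.mod_eq_of_lt (by omega)]
          exact hHgen m (m - 1) (by omega) (by omega) harc (by omega)
            (Or.inr ⟨⟨by omega, by omega⟩, hpm1⟩)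
        · rw [h', show m % m = 0 from Nat.mod_self m]
          exact hHgen m 0 (by omega) (by omega) harc (by omega)
            (Or.inr ⟨⟨by omega, by omega⟩, h0'⟩)
  · -- Case B : some chord is degenerate; all chords pass through a common circle point
    push_neg at hA
    obtain ⟨d, hdm, hdeg⟩ := hA
    obtain ⟨n, hn⟩ := circpt_inj hdeg.symm
    have hd1 : t d ≤ t (d + m) := hmono (by omega)
    have hd2 : 0 ≤ t d := hlb d
    have hd3 : t (d + m) ≤ 1 := hub _ (by omega)
    have hn01 : n = 0 ∨ n = 1 := by
      have h1 : (0:ℝ) ≤ (n:ℝ) := by rw [← hn]; linarith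
      have h2 : (n:ℝ) ≤ 1 := by rw [← hn]; linarith
      have h1' : (0:ℤ) ≤ n := by exact_mod_cast h1
      have h2' : n ≤ 1 := by exact_mod_cast h2
      omega
    obtain ⟨τ, hτ⟩ : ∃ τ, ∀ c, c < m →
        circpt (t c) = circpt τ ∨ circpt (t (c + m)) = circpt τ := by
      rcases hn01 with h | h
      · refine ⟨t d, ?_⟩
        have heq : t d = t (d + m) := by
          rw [h] at hn; push_cast at hn; linarith
        intro c hc
        rcases le_total c d with hcd | hcd
        · right
          have hv : t (c + m) = t d := by
            refine le_antisymm ?_ (hmono (by omega))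
            rw [heq]; exact hmono (by omega)
          rw [hv]
        · left
          have hv : t c = t d := by
            refine le_antisymm ?_ (hmono hcd)
            rw [heq]; exact hmono (by omega)
          rw [hv]
      · refine ⟨0, ?_⟩
        have hval : t (d + m) = t d + 1 := by
          rw [h] at hn; push_cast at hn; linarith
        have htd0 : t d = 0 := by linarith
        have htdm1 : t (d + m) = 1 := by linarith
        intro c hc
        rcases le_total c d with hcd | hcd
        · left
          have hv : t c = 0 := le_antisymm (by rw [← htd0]; exact hmono hcd) (hlb c)
          rw [hv]
        · right
          have hv : t (c + m) = 1 :=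
            le_antisymm (hub _ (by omega)) (by rw [← htdm1]; exact hmono (by omega))
          rw [hv, show (1:ℝ) = 0 + ((1:ℤ):ℝ) by norm_num, circpt_add_int]
    have hPzero : ∀ c, c < m →
        gg (circpt (t c)) (circpt (t (c + m))) (circpt τ) = 0 := by
      intro c hc
      rcases hτ c hc with h | h
      · rw [← h]; exact gg_left _ _
      · rw [← h]; exact gg_right _ _
    obtain ⟨u, μ, hu0, hu1, hμ, hu⟩ :=
      ray_hits (circpt τ) y₀ (norm_circpt τ) (hdisk y₀ hy₀F)
    have hGu : ∀ c, c < m →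
        gg (circpt (t c)) (circpt (t (c + m))) (circpt u) =
          μ * gg (circpt (t c)) (circpt (t (c + m))) y₀ := by
      intro c hc
      rw [hu, gg_affine, hPzero c hc]; ring
    have hyP : y₀ ≠ circpt τ := by
      intro h
      have h1 := norm_circpt τ
      rw [← h] at h1
      have h2 := hdisk y₀ hy₀F
      linarith
    have hune : ∀ e, e ≤ 2 * m → t e ≠ u := by
      intro e he heq
      have hPe : ∃ c, c < m ∧
          (circpt (t c) = circpt (t e) ∨ circpt (t (c + m)) = circpt (t e)) := by
        rcases lt_or_ge e m with h | h
        · exact ⟨e, h, Or.inl rfl⟩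
        · rcases eq_or_lt_of_le he with h2 | h2
          · refine ⟨0, by omega, Or.inl ?_⟩
            rw [h2, ht1, ht0]
            exact circpt_one.symm
          · refine ⟨e - m, by omega, Or.inr ?_⟩
            rw [show e - m + m = e from by omega]
      obtain ⟨c, hc, hend⟩ := hPe
      by_cases hnd : circpt (t c) ≠ circpt (t (c + m))
      · have h0 : gg (circpt (t c)) (circpt (t (c + m))) (circpt u) = 0 := by
          rw [← heq]
          rcases hend with h | h
          · rw [← h]; exact gg_left _ _
          · rw [← h]; exact gg_right _ _
        rw [hGu c hc] at h0
        rcases mul_eq_zero.mp h0 with h | h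
        · exact hμ.ne' h
        · exact hGF c hc hnd y₀ hy₀F h
      · push_neg at hnd
        have hcP : circpt (t c) = circpt τ := by
          rcases hτ c hc with h | h
          · exact h
          · rw [hnd]; exact h
        have hzP : circpt u = circpt τ := by
          rw [← heq]
          rcases hend with h | h
          · rw [← h]; exact hcP
          · rw [← h, ← hnd]; exact hcP
        rw [hu] at hzP
        have hzero : μ • (y₀ - circpt τ) = 0 := by
          have h3 : μ • (y₀ - circpt τ) = (circpt τ + μ • (y₀ - circpt τ)) - circpt τ := by
            abel
          rw [h3, hzP]
          abel
        rcases smul_eq_zero.mp hzero with h | h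
        · exact hμ.ne' h
        · exact hyP (sub_eq_zero.mp h)
    have hex : ∃ i, u < t i := ⟨2 * m, by rw [ht1]; exact hu1⟩
    have hspec : u < t (Nat.find hex) := Nat.find_spec hex
    have hi2 : Nat.find hex ≤ 2 * m := by
      by_contra hgt
      push_neg at hgt
      have hmin := Nat.find_min hex (show 2 * m < Nat.find hex from hgt)
      rw [ht1] at hmin
      exact hmin hu1
    have hi1 : 1 ≤ Nat.find hex := by
      rcases Nat.eq_zero_or_pos (Nat.find hex) with h | h
      · exfalso
        have h4 := hspec
        rw [h, ht0] at h4
        linarith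
      · exact h
    have hlow : t (Nat.find hex - 1) ≤ u := by
      by_contra hlt
      push_neg at hlt
      exact (Nat.find_min hex (show Nat.find hex - 1 < Nat.find hex by omega)) hlt
    have hlow' : t (Nat.find hex - 1) < u :=
      lt_of_le_of_ne hlow (hune (Nat.find hex - 1) (by omega))
    refine ⟨Nat.find hex, hi1, hi2, ?_⟩
    intro j hj hnd
    have hcm : j % m < m := Nat.mod_lt _ (by omega)
    have hndc := (hndiff j).mp hnd
    have hti : t (Nat.find hex - 1) < t (Nat.find hex) := lt_trans hlow' hspec
    have hv1 : t (Nat.find hex - 1) < (t (Nat.find hex - 1) + t (Nat.find hex)) / 2 := by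
      linarith
    have hv2 : (t (Nat.find hex - 1) + t (Nat.find hex)) / 2 < t (Nat.find hex) := by
      linarith
    have hGuy := hGu (j % m) hcm
    rw [harcmid (Nat.find hex)]
    by_cases hcase : j % m + m ≤ Nat.find hex - 1 ∨ Nat.find hex ≤ j % m
    · have h1 := hsgn_pos (j % m) (Nat.find hex) _ hcm hndc hi1 hi2 hv1 hv2 hcase
      have h2 := hsgn_pos (j % m) (Nat.find hex) u hcm hndc hi1 hi2 hlow' hspec hcase
      rw [hGuy] at h2
      have h3 : 0 < gg (circpt (t (j % m))) (circpt (t (j % m + m))) y₀ := by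
        nlinarith [hμ, h2]
      exact mul_pos h1 h3
    · push_neg at hcase
      obtain ⟨hca, hcb⟩ := hcase
      have h1 := hsgn_neg (j % m) (Nat.find hex) _ hcm hndc hi1 hi2 hv1 hv2
        (by omega) (by omega)
      have h2 := hsgn_neg (j % m) (Nat.find hex) u hcm hndc hi1 hi2 hlow' hspec
        (by omega) (by omega)
      rw [hGuy] at h2
      have h3 : gg (circpt (t (j % m))) (circpt (t (j % m + m))) y₀ < 0 := by
        nlinarith [hμ, h2]
      exact mul_pos_of_neg_of_neg h1 h3
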